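/- Let σ_x = [[0,1],[1,0]], σ_z = [[1,0],[0,−1]], σ_+ = [[0,1],[0,0]], σ_− = [[0,0],[1,0]]. Consider the solution ρ : ℝ → M_2(ℂ) of the master equation dρ/dt = ½(σ_x ρ σ_x − ρ) + sin(t)(σ_− ρ σ_+ − ½(σ_+σ_− ρ + ρ σ_+σ_−)) with initial condition ρ(0) = ½·I. Then ρ(2π) = ½(I − κ σ_z) with κ = e^{1−2π} ∫_0^{2π} sin(s) e^{s − cos(s)} ds, and |κ| > 1; consequently ρ(2π) is not positive semidefinite, so the dynamics generated by the sum of these two generators is not physical. -/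

import Mathlib

open Matrix
open scoped ComplexOrder

attribute [local instance] Matrix.normedAddCommGroup Matrix.normedSpace

noncomputable def sigmaX : Matrix (Fin 2) (Fin 2) ℂ := !![0, 1; 1, 0]
noncomputable def sigmaZ : Matrix (Fin 2) (Fin 2) ℂ := !![1, 0; 0, -1]
noncomputable def sigmaP : Matrix (Fin 2) (Fin 2) ℂ := !![0, 1; 0, 0]
noncomputable def sigmaM : Matrix (Fin 2) (Fin 2) ℂ := !![0, 0; 1, 0]

/-- The constant `κ = e^{1-2π} ∫_0^{2π} sin(s) e^{s - cos(s)} ds`. -/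
noncomputable def kappa14 : ℝ :=
  Real.exp (1 - 2 * Real.pi) *
    ∫ s in (0:ℝ)..(2 * Real.pi), Real.sin s * Real.exp (s - Real.cos s)

/-!
Writing `ρ = !![a, b; c, d]`, the master equation decouples: the trace `a + d` is conserved,
`b + c` and `b - c` solve homogeneous scalar linear equations and so stay `0`, and
`a' = ½ - (1 + sin t) a`, which the integrating factor `e^{t - cos t}` solves in closed form;
at `t = 2π` this gives `2 a = 1 - κ`. Then `κ < -1` amounts to
`e^{1-2π} ∫₀^{2π} e^{s - cos s} ds > 2 - e^{-2π}`, which follows from bounding `e^{-cos s}` below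
by its quartic Taylor polynomial (remainder from `Real.exp_bound`) and integrating
`e^s p(cos s)` exactly. The diagonal entry `(1 + κ)/2 < 0` then rules out positive
semidefiniteness.
-/

open Real Polynomial intervalIntegral

section VariationOfConstants

variable {E : Type*} [NormedAddCommGroup E] [NormedSpace ℝ E] [CompleteSpace E]
  {u h : ℝ → E} {F F' : ℝ → ℝ}

theorem exp_smul_sub_exp_smul_eq_integral (hF : ∀ t, HasDerivAt F (F' t) t)
    (hh : Continuous h) (hu : ∀ t, HasDerivAt u (h t - F' t • u t) t) (a b : ℝ) :
    exp (F b) • u b - exp (F a) • u a = ∫ s in a..b, exp (F s) • h s := by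
  have hFc : Continuous F := continuous_iff_continuousAt.2 fun t => (hF t).continuousAt
  refine (integral_eq_sub_of_hasDerivAt (f := fun s => exp (F s) • u s) (fun t _ => ?_)
    ((by fun_prop : Continuous fun s => exp (F s) • h s).intervalIntegrable _ _)).symm
  exact ((hF t).exp.smul (hu t)).congr_deriv (by module)

theorem eq_zero_of_hasDerivAt_eq_neg_smul (hF : ∀ t, HasDerivAt F (F' t) t)
    (hu : ∀ t, HasDerivAt u (-(F' t • u t)) t) (h0 : u 0 = 0) (t : ℝ) : u t = 0 := by
  have key := exp_smul_sub_exp_smul_eq_integral (u := u) hF continuous_zero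
    (fun t => by simpa only [Pi.zero_apply, zero_sub] using hu t) 0 t
  simpa [h0, (exp_pos _).ne'] using key

end VariationOfConstants

theorem hasDerivAt_exp_mul_eval_cos (P : ℝ[X]) (s : ℝ) :
    HasDerivAt (fun s => exp s * (P.eval (cos s) + sin s * P.derivative.eval (cos s)))
      (exp s * (P.eval (cos s) + cos s * P.derivative.eval (cos s)
        - sin s ^ 2 * P.derivative.derivative.eval (cos s))) s := by
  have hP := (P.hasDerivAt (cos s)).comp s (hasDerivAt_cos s)
  have hP' := (P.derivative.hasDerivAt (cos s)).comp s (hasDerivAt_cos s)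
  refine ((hasDerivAt_exp s).mul (hP.add ((hasDerivAt_sin s).mul hP'))).congr_deriv ?_
  simp only [Function.comp_apply, Pi.add_apply, Pi.mul_apply]
  ring

theorem integral_exp_mul_eval_cos (P : ℝ[X]) :
    ∫ s in (0)..2 * π, exp s * (P.eval (cos s) + cos s * P.derivative.eval (cos s)
        - sin s ^ 2 * P.derivative.derivative.eval (cos s)) = (exp (2 * π) - 1) * P.eval 1 := by
  rw [integral_eq_sub_of_hasDerivAt (fun s _ => hasDerivAt_exp_mul_eval_cos P s)
    ((by fun_prop : Continuous _).intervalIntegrable _ _)]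
  simp only [cos_two_pi, sin_two_pi, cos_zero, sin_zero, exp_zero]
  ring

theorem quartic_taylor_sub_le_exp {x : ℝ} (hx : |x| ≤ 1) :
    1 + x + x ^ 2 / 2 + x ^ 3 / 6 + x ^ 4 / 24 - 1 / 100 ≤ exp x := by
  have h := Real.exp_bound hx (n := 5) (by norm_num)
  have hx5 : |x| ^ 5 ≤ 1 := pow_le_one₀ (abs_nonneg x) hx
  simp only [Finset.sum_range_succ, Finset.sum_range_zero, Nat.factorial] at h
  norm_num at h
  linarith [(abs_le.1 h).1]

theorem mul_le_integral_exp_sub_cos :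
    (exp (2 * π) - 1) * (7583 / 10200) ≤ ∫ s in (0)..2 * π, exp (s - cos s) := by
  -- `P + X P' - (1 - X²) P'' = 1 - X + X²/2 - X³/6 + X⁴/24 - 1/100`; the operator sends `X^k` to
  -- `(1 + k²) X^k - k (k - 1) X^(k-2)`, so the coefficients are solved for from the top down.
  set P : ℝ[X] := C (2043 / 1700) - C (11 / 20) * X + C (9 / 85) * X ^ 2 - C (1 / 60) * X ^ 3
    + C (1 / 408) * X ^ 4
  have hP1 : P.eval 1 = 7583 / 10200 := by norm_num [P]
  rw [← hP1, ← integral_exp_mul_eval_cos P]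
  refine integral_mono_on two_pi_pos.le ((by fun_prop : Continuous _).intervalIntegrable _ _)
    ((by fun_prop : Continuous _).intervalIntegrable _ _) fun s _ => ?_
  have htaylor := quartic_taylor_sub_le_exp (x := -cos s) (by rw [abs_neg]; exact abs_cos_le_one s)
  rw [exp_sub, div_eq_mul_inv, ← exp_neg]
  refine mul_le_mul_of_nonneg_left (le_trans (le_of_eq ?_) htaylor) (exp_pos s).le
  rw [sin_sq]
  simp [P]
  ring

theorem hasDerivAt_exp_sub_cos (s : ℝ) :
    HasDerivAt (fun s => exp (s - cos s)) ((1 + sin s) * exp (s - cos s)) s :=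
  (((hasDerivAt_id' s).fun_sub (hasDerivAt_cos s)).exp).congr_deriv (by ring)

theorem kappa14_eq :
    kappa14 = 1 - exp (-(2 * π)) - exp (1 - 2 * π) * ∫ s in (0)..2 * π, exp (s - cos s) := by
  have hFTC : ∫ s in (0)..2 * π, (1 + sin s) * exp (s - cos s) = exp (2 * π - 1) - exp (-1) := by
    rw [integral_eq_sub_of_hasDerivAt (fun s _ => hasDerivAt_exp_sub_cos s)
      ((by fun_prop : Continuous _).intervalIntegrable _ _)]
    norm_num
  have hsplit : ∫ s in (0)..2 * π, sin s * exp (s - cos s) =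
      (∫ s in (0)..2 * π, (1 + sin s) * exp (s - cos s)) - ∫ s in (0)..2 * π, exp (s - cos s) := by
    rw [← integral_sub ((by fun_prop : Continuous _).intervalIntegrable _ _)
      ((by fun_prop : Continuous _).intervalIntegrable _ _)]
    congr 1 with s
    ring
  rw [kappa14, hsplit, hFTC, mul_sub, mul_sub, ← exp_add, ← exp_add,
    show 1 - 2 * π + (2 * π - 1) = 0 by ring, show 1 - 2 * π + -1 = -(2 * π) by ring, exp_zero]

theorem kappa14_lt_neg_one : kappa14 < -1 := by
  set y := exp (-(2 * π))
  have hy : y * exp (2 * π) = 1 := by rw [← exp_add]; simp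
  have hy_small : y < 1 / 100 := by
    have h6 : exp 6 ≤ exp (2 * π) := exp_le_exp.2 (by linarith [pi_gt_three])
    have he6 : (2.7 : ℝ) ^ 6 < exp 6 := by
      rw [show (6 : ℝ) = (6 : ℕ) * 1 by norm_num, exp_nat_mul]
      exact pow_lt_pow_left₀ (by linarith [exp_one_gt_d9]) (by norm_num) (by norm_num)
    nlinarith [exp_pos (-(2 * π))]
  have hexp : exp (1 - 2 * π) = exp 1 * y := by rw [← exp_add]; ring_nf
  have hA : exp 1 * (1 - y) * (7583 / 10200) ≤
      exp (1 - 2 * π) * ∫ s in (0)..2 * π, exp (s - cos s) := by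
    rw [hexp]
    calc exp 1 * (1 - y) * (7583 / 10200)
        = exp 1 * y * ((exp (2 * π) - 1) * (7583 / 10200)) := by
          linear_combination (-(exp 1) * (7583 / 10200)) * hy
      _ ≤ _ := mul_le_mul_of_nonneg_left mul_le_integral_exp_sub_cos (by positivity)
  rw [kappa14_eq]
  nlinarith [exp_one_gt_d9, exp_pos (-(2 * π))]

namespace DephasingDamping

noncomputable def generator (t : ℝ) (M : Matrix (Fin 2) (Fin 2) ℂ) : Matrix (Fin 2) (Fin 2) ℂ :=
  (2:ℂ)⁻¹ • (sigmaX * M * sigmaX - M) +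
    ((Real.sin t : ℂ)) • (sigmaM * M * sigmaP -
      (2:ℂ)⁻¹ • (sigmaP * sigmaM * M + M * (sigmaP * sigmaM)))

theorem generator_eq (t : ℝ) (M : Matrix (Fin 2) (Fin 2) ℂ) :
    generator t M =
      !![2⁻¹ * (M 1 1 - M 0 0) - sin t * M 0 0, 2⁻¹ * (M 1 0 - M 0 1) - sin t / 2 * M 0 1;
         2⁻¹ * (M 0 1 - M 1 0) - sin t / 2 * M 1 0, 2⁻¹ * (M 0 0 - M 1 1) + sin t * M 0 0] := by
  ext i j
  fin_cases i <;> fin_cases j <;>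
    simp [generator, sigmaX, sigmaP, sigmaM, Matrix.mul_apply, Matrix.vecMul, dotProduct,
      Fin.sum_univ_two] <;> ring

section Solution

variable {ρ : ℝ → Matrix (Fin 2) (Fin 2) ℂ} (hode : ∀ t, HasDerivAt ρ (generator t (ρ t)) t)
include hode

theorem hasDerivAt_apply_apply (i j : Fin 2) (t : ℝ) :
    HasDerivAt (fun t => ρ t i j) (generator t (ρ t) i j) t :=
  hasDerivAt_pi.1 (hasDerivAt_pi.1 (hode t) i) j

variable (hρ0 : ρ 0 = (2:ℂ)⁻¹ • (1 : Matrix (Fin 2) (Fin 2) ℂ))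
include hρ0

theorem trace_eq_one (t : ℝ) : ρ t 0 0 + ρ t 1 1 = 1 := by
  have hderiv (t : ℝ) : HasDerivAt (fun t => ρ t 0 0 + ρ t 1 1) 0 t := by
    refine ((hasDerivAt_apply_apply hode 0 0 t).add
      (hasDerivAt_apply_apply hode 1 1 t)).congr_deriv ?_
    rw [generator_eq]
    simp
    ring
  rw [is_const_of_deriv_eq_zero (fun t => (hderiv t).differentiableAt)
    (fun t => (hderiv t).deriv) t 0, hρ0]
  norm_num

theorem offDiag_eq_zero (t : ℝ) : ρ t 0 1 = 0 ∧ ρ t 1 0 = 0 := by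
  have hsum : ρ t 0 1 + ρ t 1 0 = 0 := by
    refine eq_zero_of_hasDerivAt_eq_neg_smul (u := fun t => ρ t 0 1 + ρ t 1 0)
      (F := fun t => -cos t / 2) (F' := fun t => sin t / 2)
      (fun t => ((hasDerivAt_cos t).neg.div_const 2).congr_deriv (by ring)) (fun t => ?_)
      (by simp [hρ0]) t
    refine ((hasDerivAt_apply_apply hode 0 1 t).add
      (hasDerivAt_apply_apply hode 1 0 t)).congr_deriv ?_
    rw [generator_eq, Complex.real_smul]
    simp
    ring
  have hdiff : ρ t 0 1 - ρ t 1 0 = 0 := by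
    refine eq_zero_of_hasDerivAt_eq_neg_smul (u := fun t => ρ t 0 1 - ρ t 1 0)
      (F := fun t => t - cos t / 2) (F' := fun t => 1 + sin t / 2)
      (fun t => ((hasDerivAt_id' t).fun_sub ((hasDerivAt_cos t).div_const 2)).congr_deriv
        (by ring))
      (fun t => ?_) (by simp [hρ0]) t
    refine ((hasDerivAt_apply_apply hode 0 1 t).sub
      (hasDerivAt_apply_apply hode 1 0 t)).congr_deriv ?_
    rw [generator_eq, Complex.real_smul]
    simp
    ring
  exact ⟨by linear_combination (hsum + hdiff) / 2, by linear_combination (hsum - hdiff) / 2⟩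

theorem two_mul_apply_zero_zero_two_pi : 2 * ρ (2 * π) 0 0 = 1 - kappa14 := by
  have hdiag (t : ℝ) : HasDerivAt (fun t => ρ t 0 0) (2⁻¹ - (1 + sin t) • ρ t 0 0) t := by
    refine (hasDerivAt_apply_apply hode 0 0 t).congr_deriv ?_
    rw [generator_eq, Complex.real_smul]
    simp
    linear_combination (2⁻¹ : ℂ) * trace_eq_one hode hρ0 t
  have hvar := exp_smul_sub_exp_smul_eq_integral (F := fun t => t - cos t)
    (fun t => ((hasDerivAt_id' t).fun_sub (hasDerivAt_cos t)).congr_deriv (by ring))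
    continuous_const hdiag 0 (2 * π)
  rw [intervalIntegral.integral_smul_const] at hvar
  simp only [cos_two_pi, cos_zero, hρ0, Complex.real_smul, Matrix.smul_apply,
    Matrix.one_apply_eq, smul_eq_mul, mul_one] at hvar
  have hexp₁ : (exp (1 - 2 * π) : ℂ) * exp (2 * π - 1) = 1 := by
    rw [← Complex.ofReal_mul, ← exp_add]; simp
  have hexp₂ : (exp (1 - 2 * π) : ℂ) * exp (0 - 1) = exp (-(2 * π)) := by
    rw [← Complex.ofReal_mul, ← exp_add]; ring_nf
  rw [kappa14_eq]
  simp only [Complex.ofReal_sub, Complex.ofReal_mul, Complex.ofReal_one]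
  linear_combination 2 * (exp (1 - 2 * π) : ℂ) * hvar - 2 * ρ (2 * π) 0 0 * hexp₁ + hexp₂

theorem apply_two_pi :
    ρ (2 * π) = (2:ℂ)⁻¹ • ((1 : Matrix (Fin 2) (Fin 2) ℂ) - (kappa14 : ℂ) • sigmaZ) := by
  obtain ⟨h01, h10⟩ := offDiag_eq_zero hode hρ0 (2 * π)
  have h00 := two_mul_apply_zero_zero_two_pi hode hρ0
  have htr := trace_eq_one hode hρ0 (2 * π)
  ext i j
  fin_cases i <;> fin_cases j
  · simp [sigmaZ]
    linear_combination h00 / 2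
  · simp [sigmaZ, h01]
  · simp [sigmaZ, h10]
  · simp [sigmaZ]
    linear_combination htr - h00 / 2

end Solution

end DephasingDamping

open DephasingDamping

/-- Second counterexample of the paper: the solution of the master equation
obtained by adding the dephasing generator with constant rate `½` and the
amplitude-damping generator with rate `sin t`, started from the maximally
mixed state, reaches at `t = 2π` the matrix `½(1 - κ σ_z)` with `|κ| > 1`,
which is not positive semidefinite — so the summed dynamics is unphysical. -/
theorem stmt_14 (ρ : ℝ → Matrix (Fin 2) (Fin 2) ℂ)
    (hρ0 : ρ 0 = (2:ℂ)⁻¹ • (1 : Matrix (Fin 2) (Fin 2) ℂ))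
    (hode : ∀ t : ℝ, HasDerivAt ρ
      ((2:ℂ)⁻¹ • (sigmaX * ρ t * sigmaX - ρ t) +
        ((Real.sin t : ℂ)) • (sigmaM * ρ t * sigmaP -
          (2:ℂ)⁻¹ • (sigmaP * sigmaM * ρ t + ρ t * (sigmaP * sigmaM)))) t) :
    ρ (2 * Real.pi) = (2:ℂ)⁻¹ •
        ((1 : Matrix (Fin 2) (Fin 2) ℂ) - (kappa14 : ℂ) • sigmaZ) ∧
    1 < |kappa14| ∧
    ¬ (ρ (2 * Real.pi)).PosSemidef := by
  have hρ := apply_two_pi hode hρ0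
  have hκ := kappa14_lt_neg_one
  refine ⟨hρ, by rw [abs_of_neg (by linarith)]; linarith, fun hpsd => ?_⟩
  have h11 : ρ (2 * π) 1 1 = (((1 + kappa14) / 2 : ℝ) : ℂ) := by
    rw [hρ]; simp [sigmaZ]; ring
  have h11_nonneg := hpsd.diag_nonneg (i := 1)
  rw [h11, Complex.zero_le_real] at h11_nonneg
  linarith
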